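/- Let A be a commutative ring and O(A) = (1+ΣA²)⁻¹A. Every real prime ideal p of A is disjoint from 1+ΣA², its extension p·O(A) is a real prime ideal of O(A), and the assignments p ↦ p·O(A) and Q ↦ Q ∩ A (contraction along the localization map A → O(A)) are mutually inverse bijections between the set of real prime ideals of A and the set of real prime ideals of O(A). -/

import Mathlib

/-- An ideal `I` of a commutative ring is *real* if whenever a sum of squares
`a 0 ^ 2 + ⋯ + a (n-1) ^ 2` belongs to `I`, each `a i` belongs to `I`. -/
def IsRealIdeal {A : Type*} [CommRing A] (I : Ideal A) : Prop :=
  ∀ (n : ℕ) (a : Fin n → A), (∑ i, a i ^ 2) ∈ I → ∀ i, a i ∈ I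

theorem isSumSq_sq_mul {R : Type*} [CommRing R] (a : R) {t : R} (ht : IsSumSq t) :
    IsSumSq (a * a * t) := by
  induction ht with
  | zero => simpa using IsSumSq.zero
  | @sq_add b T pT ih =>
    have h2 : a * a * (b * b + T) = (a * b) * (a * b) + a * a * T := by ring
    rw [h2]
    exact IsSumSq.sq_add _ ih

theorem isSumSq_mul {R : Type*} [CommRing R] {s t : R} (hs : IsSumSq s) (ht : IsSumSq t) :
    IsSumSq (s * t) := by
  induction hs with
  | zero => simpa using IsSumSq.zero
  | @sq_add a S pS ih =>
    have h : (a * a + S) * t = (a * a) * t + S * t := by ring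
    rw [h]
    exact (isSumSq_sq_mul a ht).add ih

/-- The multiplicative subset `1 + ΣA²` of elements of the form `1` plus a sum of squares. -/
def oneAddSumSq (A : Type*) [CommRing A] : Submonoid A where
  carrier := {x | ∃ s, IsSumSq s ∧ x = 1 + s}
  one_mem' := ⟨0, IsSumSq.zero, by ring⟩
  mul_mem' := by
    rintro x y ⟨s, hs, rfl⟩ ⟨t, ht, rfl⟩
    exact ⟨s + t + s * t, (hs.add ht).add (isSumSq_mul hs ht), by ring⟩

/-! A proper real ideal cannot contain `1 + s` with `s` a sum of squares, since realness would put
`1` in it; so real primes avoid `1 + ΣA²` and the prime correspondence of the localization applies. -/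

theorem IsSumSq.exists_eq_sum_fin_sq {A : Type*} [CommSemiring A] {s : A} (h : IsSumSq s) :
    ∃ (n : ℕ) (a : Fin n → A), s = ∑ i, a i ^ 2 := by
  induction h with
  | zero => exact ⟨0, ![], by simp⟩
  | @sq_add b t _ ih =>
    obtain ⟨n, a, rfl⟩ := ih
    exact ⟨n + 1, Fin.cons b a, by simp [Fin.sum_univ_succ, sq]⟩

namespace IsRealIdeal

variable {A : Type*} [CommRing A] {I : Ideal A}

theorem mem_of_sq_add_mem (hI : IsRealIdeal I) {a s : A} (hs : IsSumSq s)
    (h : a ^ 2 + s ∈ I) : a ∈ I := by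
  obtain ⟨n, b, rfl⟩ := hs.exists_eq_sum_fin_sq
  simpa using hI (n + 1) (Fin.cons a b) (by simpa [Fin.sum_univ_succ] using h) 0

theorem one_add_notMem (hI : IsRealIdeal I) (hI' : I ≠ ⊤) {s : A} (hs : IsSumSq s) :
    1 + s ∉ I := fun h =>
  hI' <| (Ideal.eq_top_iff_one I).2 <| hI.mem_of_sq_add_mem hs (by rwa [one_pow])

theorem disjoint_oneAddSumSq (hI : IsRealIdeal I) (hI' : I ≠ ⊤) :
    Disjoint (oneAddSumSq A : Set A) I := by
  rw [Set.disjoint_left]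
  rintro _ ⟨s, hs, rfl⟩
  exact hI.one_add_notMem hI' hs

theorem comap {B : Type*} [CommRing B] (f : A →+* B) {J : Ideal B} (hJ : IsRealIdeal J) :
    IsRealIdeal (J.comap f) := fun n a ha =>
  hJ n (f ∘ a) (by simpa using ha)

/-- Clearing a common denominator `b` of the `x i` turns `∑ x i ^ 2 ∈ Q` into
`∑ (b * x i) ^ 2 ∈ Q` with every `b * x i` in the image of `A`, and `b` is a unit. -/
theorem of_comap_of_isLocalization {S : Type*} [CommRing S] [Algebra A S] (M : Submonoid A)
    [IsLocalization M S] {Q : Ideal S} (hQ : IsRealIdeal (Q.comap (algebraMap A S))) :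
    IsRealIdeal Q := by
  intro n x hx i
  obtain ⟨b, hb⟩ := IsLocalization.exist_integer_multiples M Finset.univ x
  choose a ha using fun j => hb j (Finset.mem_univ j)
  have hax : ∀ j, algebraMap A S (a j) = algebraMap A S b * x j := fun j => by
    rw [ha j, Algebra.smul_def]
  have hsum : (∑ j, a j ^ 2) ∈ Q.comap (algebraMap A S) := by
    have : algebraMap A S (∑ j, a j ^ 2) = algebraMap A S b ^ 2 * ∑ j, x j ^ 2 := by
      simp only [map_sum, map_pow, hax, mul_pow, Finset.mul_sum]
    rw [Ideal.mem_comap, this]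
    exact Q.mul_mem_left _ hx
  have hbx : algebraMap A S b * x i ∈ Q := by
    rw [← hax]
    exact hQ n a hsum i
  exact (Q.unit_mul_mem_iff_mem (IsLocalization.map_units S b)).1 hbx

end IsRealIdeal

/-- For a commutative ring `A` with `O(A) = (1+ΣA²)⁻¹A`: every real prime
ideal `p` of `A` is disjoint from `1+ΣA²`, its extension `p·O(A)` is a real prime ideal of
`O(A)`, and extension and contraction along `A → O(A)` are mutually inverse bijections
between the real prime ideals of `A` and those of `O(A)`. -/
theorem realSpec_localization_bijection {A : Type*} [CommRing A] :
    (∀ p : Ideal A, p.IsPrime → IsRealIdeal p →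
      (∀ s : A, IsSumSq s → 1 + s ∉ p) ∧
      (p.map (algebraMap A (Localization (oneAddSumSq A)))).IsPrime ∧
      IsRealIdeal (p.map (algebraMap A (Localization (oneAddSumSq A)))) ∧
      (p.map (algebraMap A (Localization (oneAddSumSq A)))).comap
          (algebraMap A (Localization (oneAddSumSq A))) = p) ∧
    (∀ Q : Ideal (Localization (oneAddSumSq A)), Q.IsPrime → IsRealIdeal Q →
      (Q.comap (algebraMap A (Localization (oneAddSumSq A)))).IsPrime ∧
      IsRealIdeal (Q.comap (algebraMap A (Localization (oneAddSumSq A)))) ∧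
      (Q.comap (algebraMap A (Localization (oneAddSumSq A)))).map
          (algebraMap A (Localization (oneAddSumSq A))) = Q) := by
  set M := oneAddSumSq A
  refine ⟨fun p hp hpr => ?_, fun Q hQ hQr =>
    ⟨hQ.comap _, hQr.comap _, IsLocalization.map_under M _ Q⟩⟩
  have hdisj := hpr.disjoint_oneAddSumSq hp.ne_top
  have hunder := IsLocalization.under_map_of_isPrime_disjoint M (Localization M) hp hdisj
  refine ⟨fun s hs => hpr.one_add_notMem hp.ne_top hs,
    IsLocalization.isPrime_of_isPrime_disjoint M _ p hp hdisj, ?_, hunder⟩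
  exact IsRealIdeal.of_comap_of_isLocalization M (by rwa [← hunder] at hpr)
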